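/- arXiv:math/0607560 — 3 statements merged into one kernel-verified Lean document; each statement's English description precedes it below -/
import Mathlib

section
/- Let $\mathcal{G}$ be the metric on unordered $Q$-tuples of real numbers given by $\mathcal{G}(A,B)^2 = \min_\sigma \sum_i (a_i - b_{\sigma(i)})^2$. Let $A=(a_1\le\cdots\le a_Q)$, $B=(b_1\le\cdots\le b_Q)$, and define $\gamma(t)$ to have components $(1-t)a_i + t b_i$. Then for every unordered $Q$-tuple $C$ of reals and $t\in[0,1]$: $\mathcal{G}(\gamma(t),C)^2 = (1-t)\mathcal{G}(A,C)^2 + t\,\mathcal{G}(B,C)^2 - t(1-t)\mathcal{G}(A,B)^2$. -/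
/-- The squared distance on unordered `Q`-tuples of reals:
`𝒢(A,B)² = min over permutations σ of ∑ᵢ (aᵢ - b_{σ(i)})²`. -/
noncomputable def GsqR {Q : ℕ} (a b : Fin Q → ℝ) : ℝ :=
  ⨅ σ : Equiv.Perm (Fin Q), ∑ i, (a i - b (σ i)) ^ 2

lemma GsqR_bdd {Q : ℕ} (a b : Fin Q → ℝ) :
    BddBelow (Set.range fun σ : Equiv.Perm (Fin Q) => ∑ i, (a i - b (σ i)) ^ 2) := by
  refine ⟨0, ?_⟩
  rintro x ⟨σ, rfl⟩
  exact Finset.sum_nonneg fun i _ => sq_nonneg _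

lemma GsqR_le {Q : ℕ} (a b : Fin Q → ℝ) (σ : Equiv.Perm (Fin Q)) :
    GsqR a b ≤ ∑ i, (a i - b (σ i)) ^ 2 :=
  ciInf_le (GsqR_bdd a b) σ

/-- For monotone tuples, the identity permutation is optimal. -/
lemma GsqR_of_monotone {Q : ℕ} {a b : Fin Q → ℝ} (ha : Monotone a) (hb : Monotone b) :
    GsqR a b = ∑ i, (a i - b i) ^ 2 := by
  refine le_antisymm (by simpa using GsqR_le a b 1) (le_ciInf fun σ => ?_)
  have hmono : Monovary a b := fun i j hij => ha (le_of_not_gt fun h => (hb h.le).not_gt hij)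
  have hre : ∑ i, a i * b (σ i) ≤ ∑ i, a i * b i := by
    simpa [smul_eq_mul] using hmono.sum_smul_comp_perm_le_sum_smul (σ := σ)
  have hbsq : ∑ i, (b (σ i)) ^ 2 = ∑ i, (b i) ^ 2 :=
    Equiv.sum_comp σ (fun i => (b i) ^ 2)
  have expand : ∀ (y : Fin Q → ℝ), ∑ i, (a i - y i) ^ 2
      = ∑ i, (a i) ^ 2 + ∑ i, (y i) ^ 2 - 2 * ∑ i, a i * y i := by
    intro y
    rw [← Finset.sum_add_distrib, Finset.mul_sum, ← Finset.sum_sub_distrib]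
    exact Finset.sum_congr rfl fun i _ => by ring
  rw [expand (fun i => b i), expand (fun i => b (σ i))]
  simp only [hbsq]
  linarith

lemma GsqR_comp_right {Q : ℕ} (a b : Fin Q → ℝ) (τ : Equiv.Perm (Fin Q)) :
    GsqR a (b ∘ τ) = GsqR a b := by
  unfold GsqR
  exact Equiv.iInf_congr (Equiv.mulLeft τ) fun σ => rfl

/-- `𝒬_Q(ℝ)` is flat in the sense of Alexandrov: along the order-preserving
interpolation geodesic, the comparison identity holds with equality. -/
theorem QQR_flat {Q : ℕ} (a b : Fin Q → ℝ) (ha : Monotone a) (hb : Monotone b)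
    (c : Fin Q → ℝ) (t : ℝ) (ht : t ∈ Set.Icc (0:ℝ) 1) :
    GsqR (fun i => (1 - t) * a i + t * b i) c
      = (1 - t) * GsqR a c + t * GsqR b c - t * (1 - t) * GsqR a b := by
  obtain ⟨ht0, ht1⟩ := ht
  set τ := Tuple.sort c with hτ
  have hc' : Monotone (c ∘ τ) := Tuple.monotone_sort c
  have hγ : Monotone (fun i => (1 - t) * a i + t * b i) := by
    intro i j hij
    have := ha hij; have := hb hij
    have h1t : (0:ℝ) ≤ 1 - t := by linarith
    dsimp only
    nlinarith
  have e1 : GsqR (fun i => (1 - t) * a i + t * b i) c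
      = ∑ i, ((1 - t) * a i + t * b i - c (τ i)) ^ 2 := by
    rw [← GsqR_comp_right _ c τ, GsqR_of_monotone hγ hc']
    rfl
  have e2 : GsqR a c = ∑ i, (a i - c (τ i)) ^ 2 := by
    rw [← GsqR_comp_right a c τ, GsqR_of_monotone ha hc']; rfl
  have e3 : GsqR b c = ∑ i, (b i - c (τ i)) ^ 2 := by
    rw [← GsqR_comp_right b c τ, GsqR_of_monotone hb hc']; rfl
  have e4 : GsqR a b = ∑ i, (a i - b i) ^ 2 := GsqR_of_monotone ha hb
  rw [e1, e2, e3, e4, Finset.mul_sum, Finset.mul_sum, Finset.mul_sum,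
    ← Finset.sum_add_distrib, ← Finset.sum_sub_distrib]
  exact Finset.sum_congr rfl fun i _ => by ring
end

section
/- The map $\psi:\mathbb{Q}_2(\mathbb{R}^2)\to\mathbb{R}^4$ sending an unordered pair to its lexicographically ordered listing is not Lipschitz. Specifically, for $A_\epsilon = [[(1,1)]]+[[(1+\epsilon,2)]]$ and $B_\epsilon = [[(1+\epsilon,1)]]+[[(1,2)]]$ with $0<\epsilon<1/2$, one has $\mathcal{G}(A_\epsilon,B_\epsilon) = \sqrt{2}\,\epsilon$ while $|\psi(A_\epsilon)-\psi(B_\epsilon)| = \sqrt{2}$. -/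
/-- The squared distance on unordered `Q`-tuples in `ℝⁿ`. -/
noncomputable def Gsq {n Q : ℕ} (a b : Fin Q → EuclideanSpace ℝ (Fin n)) : ℝ :=
  ⨅ σ : Equiv.Perm (Fin Q), ∑ i, ‖a i - b (σ i)‖ ^ 2

/-- A point of `ℝⁿ` (with the Euclidean norm) given by coordinates. -/
noncomputable def pt {n : ℕ} (v : Fin n → ℝ) : EuclideanSpace ℝ (Fin n) :=
  (WithLp.equiv 2 (Fin n → ℝ)).symm v

lemma norm_pt_sub {n : ℕ} (u v : Fin n → ℝ) :
    ‖pt u - pt v‖ = Real.sqrt (∑ i, (u i - v i) ^ 2) := by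
  rw [EuclideanSpace.norm_eq]
  congr 1
  apply Finset.sum_congr rfl
  intro i _
  rw [Real.norm_eq_abs, sq_abs]
  rfl

/-- The lexicographic-ordering map `ψ : 𝒬₂(ℝ²) → ℝ⁴` is not Lipschitz:
for `A_ε = [[(1,1)]] + [[(1+ε,2)]]` and `B_ε = [[(1+ε,1)]] + [[(1,2)]]`
with `0 < ε < 1/2` one has `𝒢(A_ε, B_ε) = √2 ε` while
`|ψ(A_ε) - ψ(B_ε)| = √2` (since `ψ(A_ε) = (1,1,1+ε,2)` and
`ψ(B_ε) = (1,2,1+ε,1)`). -/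
theorem lex_map_not_lipschitz (ε : ℝ) (hε : ε ∈ Set.Ioo (0:ℝ) (1/2)) :
    Real.sqrt (Gsq
        (![pt ![1, 1], pt ![1 + ε, 2]])
        (![pt ![1 + ε, 1], pt ![1, 2]]))
      = Real.sqrt 2 * ε ∧
    ‖pt ![1, 1, 1 + ε, 2] - pt ![1, 2, 1 + ε, 1]‖ = Real.sqrt 2 := by
  obtain ⟨h0, h1⟩ := hε
  have hsq : Real.sqrt (ε ^ 2) ^ 2 = ε ^ 2 := Real.sq_sqrt (sq_nonneg ε)
  constructor
  · have hG : Gsq (![pt ![1, 1], pt ![1 + ε, 2]]) (![pt ![1 + ε, 1], pt ![1, 2]]) = 2 * ε ^ 2 := by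
      apply le_antisymm
      · have := ciInf_le (f := fun σ : Equiv.Perm (Fin 2) =>
          ∑ i, ‖(![pt ![1, 1], pt ![1 + ε, 2]]) i - (![pt ![1 + ε, 1], pt ![1, 2]]) (σ i)‖ ^ 2)
          (Finite.bddBelow_range _) 1
        refine le_trans this ?_
        simp [Fin.sum_univ_two, norm_pt_sub]
        nlinarith
      · apply le_ciInf
        intro σ
        rcases (show σ = 1 ∨ σ = Equiv.swap 0 1 by revert σ; decide) with rfl | rfl <;>
          · simp [Fin.sum_univ_two, norm_pt_sub, Equiv.swap_apply_left, Equiv.swap_apply_right]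
            nlinarith [Real.sq_sqrt (show (0:ℝ) ≤ 1 + 1 by norm_num),
              Real.sqrt_nonneg ((1:ℝ) + 1), Real.sq_sqrt (sq_nonneg ((1:ℝ) - 2))]
    rw [hG, show (2:ℝ) * ε ^ 2 = (Real.sqrt 2 * ε) ^ 2 by
      nlinarith [Real.sq_sqrt (show (0:ℝ) ≤ 2 by norm_num)]]
    exact Real.sqrt_sq (by positivity)
  · rw [norm_pt_sub]
    norm_num [Fin.sum_univ_four, Matrix.cons_val_two, Matrix.cons_val_three]
end

section
/- Let $f$ be a $p$-valued and $g$ a $q$-valued measurable function and $0<k<1$. Then $\|f\oplus g\|_k^k \le q^{k/2}\|f\|_k^k + p^{k/2}\|g\|_k^k$, where $\|h\|_k^k = \int \mathcal{G}(h(x),N[[0]])^k\,d\mu$. -/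
open MeasureTheory

lemma sum_le_sqrt_card_mul {m : ℕ} (a : Fin m → ℝ) (ha : ∀ i, 0 ≤ a i) :
    ∑ i, a i ≤ Real.sqrt m * Real.sqrt (∑ i, a i ^ 2) := by
  have h1 : (∑ i, a i) ^ 2 ≤ (m : ℝ) * ∑ i, a i ^ 2 := by
    have := sq_sum_le_card_mul_sum_sq (s := (Finset.univ : Finset (Fin m))) (f := a)
    simpa [Finset.card_univ] using this
  calc ∑ i, a i = Real.sqrt ((∑ i, a i) ^ 2) := by
        rw [Real.sqrt_sq (Finset.sum_nonneg fun i _ => ha i)]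
    _ ≤ Real.sqrt ((m : ℝ) * ∑ i, a i ^ 2) := Real.sqrt_le_sqrt h1
    _ = Real.sqrt m * Real.sqrt (∑ i, a i ^ 2) := Real.sqrt_mul (by positivity) _

lemma pointwise_sqrt {n p q : ℕ} (u : Fin p → EuclideanSpace ℝ (Fin n))
    (v : Fin q → EuclideanSpace ℝ (Fin n)) :
    Real.sqrt (∑ i, ∑ j, ‖u i + v j‖ ^ 2)
      ≤ Real.sqrt q * Real.sqrt (∑ i, ‖u i‖ ^ 2)
        + Real.sqrt p * Real.sqrt (∑ j, ‖v j‖ ^ 2) := by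
  set A := Real.sqrt (∑ i, ‖u i‖ ^ 2) with hA
  set B := Real.sqrt (∑ j, ‖v j‖ ^ 2) with hB
  have hA0 : 0 ≤ A := Real.sqrt_nonneg _
  have hB0 : 0 ≤ B := Real.sqrt_nonneg _
  have hA2 : A ^ 2 = ∑ i, ‖u i‖ ^ 2 := Real.sq_sqrt (by positivity)
  have hB2 : B ^ 2 = ∑ j, ‖v j‖ ^ 2 := Real.sq_sqrt (by positivity)
  have hSa : ∑ i, ‖u i‖ ≤ Real.sqrt p * A :=
    sum_le_sqrt_card_mul _ (fun i => norm_nonneg _)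
  have hSb : ∑ j, ‖v j‖ ≤ Real.sqrt q * B :=
    sum_le_sqrt_card_mul _ (fun j => norm_nonneg _)
  have hSa0 : 0 ≤ ∑ i, ‖u i‖ := Finset.sum_nonneg fun i _ => norm_nonneg _
  have hSb0 : 0 ≤ ∑ j, ‖v j‖ := Finset.sum_nonneg fun j _ => norm_nonneg _
  have step1 : ∑ i, ∑ j, ‖u i + v j‖ ^ 2 ≤ ∑ i, ∑ j, (‖u i‖ + ‖v j‖) ^ 2 := by
    refine Finset.sum_le_sum fun i _ => Finset.sum_le_sum fun j _ => ?_
    have := norm_add_le (u i) (v j)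
    nlinarith [norm_nonneg (u i + v j)]
  have expand : ∑ i, ∑ j, (‖u i‖ + ‖v j‖) ^ 2
      = (q : ℝ) * ∑ i, ‖u i‖ ^ 2 + 2 * (∑ i, ‖u i‖) * (∑ j, ‖v j‖)
        + (p : ℝ) * ∑ j, ‖v j‖ ^ 2 := by
    have h1 : ∀ i : Fin p, ∑ j, (‖u i‖ + ‖v j‖) ^ 2
        = (q : ℝ) * ‖u i‖ ^ 2 + 2 * ‖u i‖ * (∑ j, ‖v j‖) + ∑ j, ‖v j‖ ^ 2 := by
      intro i
      simp only [add_sq, Finset.sum_add_distrib, Finset.sum_const, Finset.card_univ,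
        Fintype.card_fin, nsmul_eq_mul, Finset.mul_sum]
    rw [Finset.sum_congr rfl fun i _ => h1 i]
    simp only [Finset.sum_add_distrib, Finset.sum_const, Finset.card_univ, Fintype.card_fin,
      nsmul_eq_mul, ← Finset.sum_mul, ← Finset.mul_sum]
  have hq0 : (0:ℝ) ≤ q := Nat.cast_nonneg _
  have hp0 : (0:ℝ) ≤ p := Nat.cast_nonneg _
  have hsqp : Real.sqrt p ^ 2 = (p : ℝ) := Real.sq_sqrt hp0
  have hsqq : Real.sqrt q ^ 2 = (q : ℝ) := Real.sq_sqrt hq0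
  have key : ∑ i, ∑ j, ‖u i + v j‖ ^ 2 ≤ (Real.sqrt q * A + Real.sqrt p * B) ^ 2 := by
    have hcross : (∑ i, ‖u i‖) * (∑ j, ‖v j‖) ≤ (Real.sqrt p * A) * (Real.sqrt q * B) :=
      mul_le_mul hSa hSb hSb0 (by positivity)
    calc ∑ i, ∑ j, ‖u i + v j‖ ^ 2 ≤ ∑ i, ∑ j, (‖u i‖ + ‖v j‖) ^ 2 := step1
      _ = (q : ℝ) * ∑ i, ‖u i‖ ^ 2 + 2 * (∑ i, ‖u i‖) * (∑ j, ‖v j‖)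
          + (p : ℝ) * ∑ j, ‖v j‖ ^ 2 := expand
      _ ≤ (Real.sqrt q * A + Real.sqrt p * B) ^ 2 := by nlinarith
  calc Real.sqrt (∑ i, ∑ j, ‖u i + v j‖ ^ 2)
      ≤ Real.sqrt ((Real.sqrt q * A + Real.sqrt p * B) ^ 2) := Real.sqrt_le_sqrt key
    _ = Real.sqrt q * A + Real.sqrt p * B := Real.sqrt_sq (by positivity)

/-- Sub-additivity of the `L^k` quasi-norm, `0 < k < 1`, for the tensor sum:
`‖f ⊕ g‖_k^k ≤ q^{k/2} ‖f‖_k^k + p^{k/2} ‖g‖_k^k`, where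
`‖h‖_k^k = ∫ 𝒢(h, N[[0]])^k dμ` and `𝒢(h, N[[0]])² = ∑ ‖h_i‖²`. -/
theorem lk_quasinorm_subadd {n p q : ℕ} {α : Type*} [MeasurableSpace α]
    (μ : Measure α)
    (f : α → Fin p → EuclideanSpace ℝ (Fin n))
    (g : α → Fin q → EuclideanSpace ℝ (Fin n))
    (hf : Measurable f) (hg : Measurable g) (k : ℝ) (hk : k ∈ Set.Ioo (0:ℝ) 1) :
    (∫⁻ x, ENNReal.ofReal (Real.sqrt (∑ i, ∑ j, ‖f x i + g x j‖ ^ 2)) ^ k ∂μ)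
      ≤ ENNReal.ofReal ((q : ℝ) ^ (k / 2)) *
          (∫⁻ x, ENNReal.ofReal (Real.sqrt (∑ i, ‖f x i‖ ^ 2)) ^ k ∂μ)
        + ENNReal.ofReal ((p : ℝ) ^ (k / 2)) *
          (∫⁻ x, ENNReal.ofReal (Real.sqrt (∑ j, ‖g x j‖ ^ 2)) ^ k ∂μ) := by
  obtain ⟨hk0, hk1⟩ := hk
  -- measurability of the two RHS integrands
  have hu : Measurable fun x => ENNReal.ofReal (Real.sqrt (∑ i, ‖f x i‖ ^ 2)) ^ k := by
    fun_prop
  have hv : Measurable fun x => ENNReal.ofReal (Real.sqrt (∑ j, ‖g x j‖ ^ 2)) ^ k := by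
    fun_prop
  -- pointwise bound
  have point : ∀ x, ENNReal.ofReal (Real.sqrt (∑ i, ∑ j, ‖f x i + g x j‖ ^ 2)) ^ k
      ≤ ENNReal.ofReal ((q : ℝ) ^ (k / 2)) *
          ENNReal.ofReal (Real.sqrt (∑ i, ‖f x i‖ ^ 2)) ^ k
        + ENNReal.ofReal ((p : ℝ) ^ (k / 2)) *
          ENNReal.ofReal (Real.sqrt (∑ j, ‖g x j‖ ^ 2)) ^ k := by
    intro x
    set A := Real.sqrt (∑ i, ‖f x i‖ ^ 2) with hA
    set B := Real.sqrt (∑ j, ‖g x j‖ ^ 2) with hB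
    have hA0 : 0 ≤ A := Real.sqrt_nonneg _
    have hB0 : 0 ≤ B := Real.sqrt_nonneg _
    have h1 : ENNReal.ofReal (Real.sqrt (∑ i, ∑ j, ‖f x i + g x j‖ ^ 2)) ^ k
        ≤ ENNReal.ofReal (Real.sqrt q * A + Real.sqrt p * B) ^ k :=
      ENNReal.rpow_le_rpow (ENNReal.ofReal_le_ofReal (pointwise_sqrt (f x) (g x))) hk0.le
    have h2 : ENNReal.ofReal (Real.sqrt q * A + Real.sqrt p * B) ^ k
        ≤ (ENNReal.ofReal (Real.sqrt q * A) + ENNReal.ofReal (Real.sqrt p * B)) ^ k :=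
      ENNReal.rpow_le_rpow (ENNReal.ofReal_add_le) hk0.le
    have h3 : (ENNReal.ofReal (Real.sqrt q * A) + ENNReal.ofReal (Real.sqrt p * B)) ^ k
        ≤ ENNReal.ofReal (Real.sqrt q * A) ^ k + ENNReal.ofReal (Real.sqrt p * B) ^ k :=
      ENNReal.rpow_add_le_add_rpow _ _ hk0.le hk1.le
    have hqk : ENNReal.ofReal (Real.sqrt q * A) ^ k
        = ENNReal.ofReal ((q : ℝ) ^ (k / 2)) * ENNReal.ofReal A ^ k := by
      rw [ENNReal.ofReal_mul (Real.sqrt_nonneg _), ENNReal.mul_rpow_of_nonneg _ _ hk0.le,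
        ENNReal.ofReal_rpow_of_nonneg (Real.sqrt_nonneg _) hk0.le,
        Real.sqrt_eq_rpow, ← Real.rpow_mul (Nat.cast_nonneg _)]
      norm_num
      rw [show (1:ℝ) / 2 * k = k / 2 by ring]
    have hpk : ENNReal.ofReal (Real.sqrt p * B) ^ k
        = ENNReal.ofReal ((p : ℝ) ^ (k / 2)) * ENNReal.ofReal B ^ k := by
      rw [ENNReal.ofReal_mul (Real.sqrt_nonneg _), ENNReal.mul_rpow_of_nonneg _ _ hk0.le,
        ENNReal.ofReal_rpow_of_nonneg (Real.sqrt_nonneg _) hk0.le,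
        Real.sqrt_eq_rpow, ← Real.rpow_mul (Nat.cast_nonneg _)]
      norm_num
      rw [show (1:ℝ) / 2 * k = k / 2 by ring]
    calc ENNReal.ofReal (Real.sqrt (∑ i, ∑ j, ‖f x i + g x j‖ ^ 2)) ^ k
        ≤ ENNReal.ofReal (Real.sqrt q * A) ^ k + ENNReal.ofReal (Real.sqrt p * B) ^ k :=
          le_trans h1 (le_trans h2 h3)
      _ = _ := by rw [hqk, hpk]
  calc (∫⁻ x, ENNReal.ofReal (Real.sqrt (∑ i, ∑ j, ‖f x i + g x j‖ ^ 2)) ^ k ∂μ)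
      ≤ ∫⁻ x, (ENNReal.ofReal ((q : ℝ) ^ (k / 2)) *
          ENNReal.ofReal (Real.sqrt (∑ i, ‖f x i‖ ^ 2)) ^ k
        + ENNReal.ofReal ((p : ℝ) ^ (k / 2)) *
          ENNReal.ofReal (Real.sqrt (∑ j, ‖g x j‖ ^ 2)) ^ k) ∂μ :=
        lintegral_mono point
    _ = _ := by
        rw [lintegral_add_left (hu.const_mul _), lintegral_const_mul _ hu,
          lintegral_const_mul _ hv]
end
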